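/- Let G be a graph with no K_4 subgraph and no odd wheel as an induced subgraph, and let Q = v_1 v_2 ... v_p v_1 be a smallest induced odd cycle in G of length p ≥ 5. Then for every index i the induced subgraph G[B_i ∪ C_i] is bipartite. -/

import Mathlib

/-- `H` is contained in `G` as an induced subgraph. -/
def ContainsInduced {α β : Type*} (H : SimpleGraph α) (G : SimpleGraph β) : Prop :=
  ∃ f : α ↪ β, ∀ a b, G.Adj (f a) (f b) ↔ H.Adj a b

/-- The odd wheel `W_n` (for odd `n ≥ 3`): a cycle of length `n` plus a hub adjacent to
all cycle vertices. -/
def wheel (n : ℕ) : SimpleGraph (Option (ZMod n)) :=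
  SimpleGraph.fromRel (fun a b =>
    (a = none ∧ b ≠ none) ∨ (∃ x : ZMod n, a = some x ∧ b = some (x + 1)))

/-- `u : ZMod k → V` lists the vertices (in cyclic order) of an induced cycle of
length `k` in `G`. -/
def IsInducedCycle {V : Type*} (G : SimpleGraph V) {k : ℕ} (u : ZMod k → V) : Prop :=
  Function.Injective u ∧ ∀ i j : ZMod k, G.Adj (u i) (u j) ↔ (j = i + 1 ∨ i = j + 1)

/-- `v : ZMod p → V` is a smallest induced odd cycle of `G` of length `p ≥ 5`:
an induced odd cycle of length `p ≥ 5` such that `G` has no induced odd cycle of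
length `k` with `5 ≤ k < p`. -/
def IsSmallestInducedOddCycle {V : Type*} (G : SimpleGraph V) {p : ℕ}
    (v : ZMod p → V) : Prop :=
  5 ≤ p ∧ Odd p ∧ IsInducedCycle G v ∧
    ∀ k : ℕ, 5 ≤ k → k < p → Odd k → ∀ u : ZMod k → V, ¬ IsInducedCycle G u

/-- `A_i`: the vertices outside the cycle `Q` whose neighbourhood on `Q` is
exactly `{v_i}`. -/
def setA {V : Type*} (G : SimpleGraph V) {p : ℕ} (v : ZMod p → V) (i : ZMod p) :
    Set V :=
  {w | w ∉ Set.range v ∧ ∀ j : ZMod p, G.Adj w (v j) ↔ j = i}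

/-- `B_i`: the vertices outside the cycle `Q` whose neighbourhood on `Q` is
exactly `{v_i, v_{i+2}}`. -/
def setB {V : Type*} (G : SimpleGraph V) {p : ℕ} (v : ZMod p → V) (i : ZMod p) :
    Set V :=
  {w | w ∉ Set.range v ∧ ∀ j : ZMod p, G.Adj w (v j) ↔ (j = i ∨ j = i + 2)}

/-- `C_i`: the vertices outside the cycle `Q` whose neighbourhood on `Q` is
exactly `{v_i, v_{i+1}, v_{i+2}}`. -/
def setC {V : Type*} (G : SimpleGraph V) {p : ℕ} (v : ZMod p → V) (i : ZMod p) :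
    Set V :=
  {w | w ∉ Set.range v ∧ ∀ j : ZMod p, G.Adj w (v j) ↔ (j = i ∨ j = i + 1 ∨ j = i + 2)}

/-- `D_i`: the vertices outside the cycle `Q` whose neighbourhood on `Q` is
exactly `{v_i, v_{i+1}, v_{i+2}, v_{i+3}}`. -/
def setD {V : Type*} (G : SimpleGraph V) {p : ℕ} (v : ZMod p → V) (i : ZMod p) :
    Set V :=
  {w | w ∉ Set.range v ∧
    ∀ j : ZMod p, G.Adj w (v j) ↔ (j = i ∨ j = i + 1 ∨ j = i + 2 ∨ j = i + 3)}


namespace BCaux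
open SimpleGraph

variable {V : Type*} {G : SimpleGraph V}

lemma colorable_two_of_all_closed_even (G : SimpleGraph V)
    (h : ∀ (x : V) (w : G.Walk x x), Even w.length) : G.Colorable 2 := by
  classical
  have hr : ∀ x : V, G.Reachable x (Quot.out (G.connectedComponentMk x)) := by
    intro x
    exact (ConnectedComponent.exact (Quot.out_eq (G.connectedComponentMk x))).symm
  have hradj : ∀ {x y : V}, G.Adj x y →
      Quot.out (G.connectedComponentMk x) = Quot.out (G.connectedComponentMk y) := by
    intro x y hxy
    rw [ConnectedComponent.sound hxy.reachable]
  let wk : ∀ x : V, G.Walk x (Quot.out (G.connectedComponentMk x)) :=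
    fun x => Classical.choice (hr x)
  refine ⟨SimpleGraph.Coloring.mk
    (fun x => if Even (wk x).length then 0 else 1) ?_⟩
  intro x y hxy heq
  have hcl : Even (Walk.cons hxy
      (((wk y).copy rfl (hradj hxy).symm).append (wk x).reverse)).length :=
    h x _
  simp only [Walk.length_cons, Walk.length_append, Walk.length_copy,
    Walk.length_reverse] at hcl
  have hpar : Even (wk x).length ↔ Even (wk y).length := by
    by_cases hx : Even (wk x).length <;> by_cases hy : Even (wk y).length <;>
      simp [hx, hy] at heq ⊢
  rcases hcl with ⟨c, hc⟩
  rcases Nat.even_or_odd (wk x).length with hx | hx <;>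
    rcases Nat.even_or_odd (wk y).length with hy | hy
  · rcases hx with ⟨a, ha⟩; rcases hy with ⟨b, hb⟩; omega
  · exact (Nat.not_odd_iff_even.mpr (hpar.mp hx)) hy |>.elim
  · exact (Nat.not_odd_iff_even.mpr (hpar.mpr hy)) hx |>.elim
  · rcases hx with ⟨a, ha⟩; rcases hy with ⟨b, hb⟩; omega


def wtake : {u v : V} → (w : G.Walk u v) → (n : ℕ) → G.Walk u (w.getVert n)
  | _, _, .nil, _ => .nil
  | _, _, .cons _ _, 0 => .nil
  | _, _, .cons h q, n+1 => .cons h (wtake q n)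

def wdrop : {u v : V} → (w : G.Walk u v) → (n : ℕ) → G.Walk (w.getVert n) v
  | _, _, .nil, _ => .nil
  | _, _, .cons h q, 0 => .cons h q
  | _, _, .cons _ q, n+1 => wdrop q n

lemma length_wtake : ∀ {u v : V} (w : G.Walk u v) (n : ℕ), n ≤ w.length →
    (wtake w n).length = n
  | _, _, .nil, 0, _ => rfl
  | _, _, .cons _ _, 0, _ => rfl
  | _, _, .cons h q, n+1, hn => by
      simpa [wtake] using length_wtake q n (by simpa using hn)

lemma length_wdrop : ∀ {u v : V} (w : G.Walk u v) (n : ℕ),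
    (wdrop w n).length = w.length - n
  | _, _, .nil, _ => by simp [wdrop]
  | _, _, .cons h q, 0 => by simp [wdrop]; rfl
  | _, _, .cons h q, n+1 => by simpa [wdrop] using length_wdrop q n

lemma getVert_wdrop : ∀ {u v : V} (w : G.Walk u v) (n m : ℕ),
    (wdrop w n).getVert m = w.getVert (n + m)
  | _, _, .nil, _, _ => rfl
  | _, _, .cons h q, 0, m => by simp [wdrop]; rfl
  | _, _, .cons h q, n+1, m => by
      rw [show n + 1 + m = (n + m) + 1 by omega]; exact getVert_wdrop q n m

lemma exists_induced_cycle_of_odd_closed (G : SimpleGraph V)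
    (hex : ∃ n, Odd n ∧ ∃ y : V, ∃ c : G.Walk y y, c.length = n) :
    ∃ k : ℕ, Odd k ∧ 3 ≤ k ∧ ∃ u : ZMod k → V, IsInducedCycle G u := by
  classical
  set k := Nat.find hex with hkdef
  obtain ⟨hkodd, y, c, hlen⟩ := Nat.find_spec hex
  have hmin := fun m (hm : m < k) => Nat.find_min hex hm
  have hkodd' : k % 2 = 1 := Nat.odd_iff.mp hkodd
  have hk1 : k ≠ 1 := by
    intro h1
    have hadj := c.adj_getVert_succ (i := 0) (by omega : 0 < c.length)
    rw [c.getVert_zero] at hadj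
    have hv : c.getVert 1 = y := c.getVert_of_length_le (by omega)
    rw [hv] at hadj
    exact G.irrefl hadj
  have hk3 : 3 ≤ k := by omega
  haveI : NeZero k := ⟨by omega⟩
  have hno : ∀ m, m < k → ∀ (z : V) (d : G.Walk z z), d.length = m → m % 2 = 0 := by
    intro m hm z d hd
    by_contra hodd
    exact hmin m hm ⟨Nat.odd_iff.mpr (by omega), z, d, hd⟩
  have hsplit : ∀ a b : ℕ, a < b → b < k → c.getVert a ≠ c.getVert b := by
    intro a b hab hbk heq
    have e1 : (wdrop c a).getVert (b - a) = c.getVert b := by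
      rw [getVert_wdrop]; congr 1; omega
    have p1 := hno (b - a) (by omega) _
      ((wtake (wdrop c a) (b - a)).copy rfl (e1.trans heq.symm))
      (by rw [Walk.length_copy, length_wtake _ _ (by rw [length_wdrop]; omega)])
    have p2 := hno (a + (k - b)) (by omega) _
      (((wtake c a).copy rfl heq).append (wdrop c b))
      (by rw [Walk.length_append, Walk.length_copy,
            length_wtake _ _ (by omega), length_wdrop, hlen])
    omega
  have hchord : ∀ a b : ℕ, a < b → b < k → b ≠ a + 1 → ¬(a = 0 ∧ b = k - 1) →
      ¬ G.Adj (c.getVert a) (c.getVert b) := by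
    intro a b hab hbk hne hext hadj
    have e1 : (wdrop c a).getVert (b - a) = c.getVert b := by
      rw [getVert_wdrop]; congr 1; omega
    have p1 := hno ((b - a) + 1) (by omega) _
      (Walk.cons hadj.symm ((wtake (wdrop c a) (b - a)).copy rfl e1))
      (by rw [Walk.length_cons, Walk.length_copy,
            length_wtake _ _ (by rw [length_wdrop]; omega)])
    have p2 := hno (a + (1 + (k - b))) (by omega) _
      ((wtake c a).append (Walk.cons hadj (wdrop c b)))
      (by simp only [Walk.length_append, Walk.length_cons,
            length_wtake _ _ (show a ≤ c.length by omega), length_wdrop, hlen]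
          omega)
    omega
  have hadjnext : ∀ a : ℕ, a < k → G.Adj (c.getVert a) (c.getVert ((a + 1) % k)) := by
    intro a ha
    have h1 := c.adj_getVert_succ (show a < c.length by omega)
    rcases Nat.lt_or_ge (a + 1) k with hlt | hge
    · rwa [Nat.mod_eq_of_lt (by omega)]
    · have hak : a + 1 = k := by omega
      have hv : c.getVert (a + 1) = y := c.getVert_of_length_le (by omega)
      rw [hv] at h1
      rw [hak, Nat.mod_self, c.getVert_zero]
      exact h1
  have hvalone : (1 : ZMod k).val = 1 := ZMod.val_one'' (by omega)
  have hvadd : ∀ i : ZMod k, (i + 1).val = (i.val + 1) % k := by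
    intro i; rw [ZMod.val_add, hvalone]
  have hvlt : ∀ i : ZMod k, i.val < k := fun i => ZMod.val_lt i
  have hvinj : ∀ i j : ZMod k, i.val = j.val → i = j :=
    fun i j h => ZMod.val_injective k h
  refine ⟨k, hkodd, hk3, fun i => c.getVert i.val, ?_, ?_⟩
  · intro i j hij
    rcases lt_trichotomy i.val j.val with h | h | h
    · exact absurd hij (hsplit _ _ h (hvlt j))
    · exact hvinj _ _ h
    · exact absurd hij.symm (hsplit _ _ h (hvlt i))
  · intro i j
    constructor
    · intro hadj
      by_contra hnot
      push_neg at hnot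
      obtain ⟨hn1, hn2⟩ := hnot
      rcases lt_trichotomy i.val j.val with h | h | h
      · by_cases hb : j.val = i.val + 1
        · exact hn1 (hvinj _ _ (by rw [hvadd, Nat.mod_eq_of_lt (by have := hvlt j; omega), ← hb]))
        · by_cases hext : i.val = 0 ∧ j.val = k - 1
          · refine hn2 (hvinj _ _ ?_)
            rw [hvadd, hext.2, hext.1]
            have : k - 1 + 1 = k := by omega
            rw [this, Nat.mod_self]
          · exact hchord _ _ h (hvlt j) hb hext hadj
      · exact G.irrefl (hvinj _ _ h ▸ hadj)
      · by_cases hb : i.val = j.val + 1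
        · exact hn2 (hvinj _ _ (by rw [hvadd, Nat.mod_eq_of_lt (by have := hvlt i; omega), ← hb]))
        · by_cases hext : j.val = 0 ∧ i.val = k - 1
          · refine hn1 (hvinj _ _ ?_)
            rw [hvadd, hext.2, hext.1]
            have : k - 1 + 1 = k := by omega
            rw [this, Nat.mod_self]
          · exact hchord _ _ h (hvlt i) hb hext hadj.symm
    · intro hj
      rcases hj with h | h
      · subst h
        show G.Adj (c.getVert i.val) (c.getVert (i + 1).val)
        rw [hvadd i]
        exact hadjnext i.val (hvlt i)
      · subst h
        show G.Adj (c.getVert (j + 1).val) (c.getVert j.val)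
        rw [hvadd j]
        exact (hadjnext j.val (hvlt j)).symm


theorem main {V : Type*} (G : SimpleGraph V)
    (hwheel : ∀ t : ℕ, 1 ≤ t → ¬ ContainsInduced (wheel (2 * t + 1)) G)
    {p : ℕ} (v : ZMod p → V) :
    ∀ i : ZMod p, (G.induce (setB G v i ∪ setC G v i)).Colorable 2 := by
  classical
  intro i
  by_contra hcol
  set S := setB G v i ∪ setC G v i with hS
  have hex : ∃ n, Odd n ∧ ∃ y : ↥S, ∃ c : (G.induce S).Walk y y, c.length = n := by
    by_contra hno
    push_neg at hno
    refine hcol (colorable_two_of_all_closed_even _ (fun x w => ?_))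
    rcases Nat.even_or_odd w.length with he | ho
    · exact he
    · exact absurd rfl (hno w.length ho x w)
  obtain ⟨k, hkodd, hk3, u, huinj, huadj⟩ := exists_induced_cycle_of_odd_closed _ hex
  obtain ⟨t, rfl⟩ := hkodd
  have ht : 1 ≤ t := by omega
  apply hwheel t ht
  haveI : NeZero (2 * t + 1) := ⟨by omega⟩
  have h10 : (1 : ZMod (2 * t + 1)) ≠ 0 := by
    have h := ZMod.val_one'' (n := 2 * t + 1) (by omega)
    intro h0
    rw [h0, ZMod.val_zero] at h
    exact one_ne_zero h.symm
  have hadjS : ∀ s : ↥S, G.Adj ↑s (v i) := by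
    intro s
    rcases s.2 with hs | hs
    · exact (hs.2 i).mpr (Or.inl rfl)
    · exact (hs.2 i).mpr (Or.inl rfl)
  have hnotrange : ∀ s : ↥S, (s : V) ≠ v i := by
    intro s h
    rcases s.2 with hs | hs <;> exact hs.1 ⟨i, h.symm⟩
  have hwadj : ∀ a b : Option (ZMod (2 * t + 1)),
      (wheel (2 * t + 1)).Adj a b ↔ a ≠ b ∧
        ((a = none ∧ b ≠ none ∨ ∃ z, a = some z ∧ b = some (z + 1)) ∨
         (b = none ∧ a ≠ none ∨ ∃ z, b = some z ∧ a = some (z + 1))) := by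
    intro a b
    unfold wheel
    exact SimpleGraph.fromRel_adj _ a b
  refine ⟨⟨fun o => o.elim (v i) (fun j => ↑(u j)), ?_⟩, ?_⟩
  · intro a b hab
    cases a with
    | none => cases b with
      | none => rfl
      | some j => exact (hnotrange (u j) (id hab).symm).elim
    | some j => cases b with
      | none => exact (hnotrange (u j) (id hab)).elim
      | some j' => exact congrArg some (huinj (Subtype.val_injective (id hab)))
  · intro a b
    cases a with
    | none => cases b with
      | none => exact iff_of_false (G.irrefl) ((wheel _).irrefl)
      | some j =>
          refine iff_of_true ((hadjS (u j)).symm) ?_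
          rw [hwadj]
          exact ⟨by simp, Or.inl (Or.inl ⟨rfl, by simp⟩)⟩
    | some x => cases b with
      | none =>
          refine iff_of_true (hadjS (u x)) ?_
          rw [hwadj]
          exact ⟨by simp, Or.inr (Or.inl ⟨rfl, by simp⟩)⟩
      | some y =>
          refine Iff.trans (huadj x y) ?_
          rw [hwadj]
          constructor
          · intro hxy
            have hne : x ≠ y := by
              rintro rfl
              rcases hxy with h | h <;> exact h10 (left_eq_add.mp h)
            refine ⟨fun h => hne (Option.some.inj h), ?_⟩
            rcases hxy with h | h
            · exact Or.inl (Or.inr ⟨x, rfl, by rw [h]⟩)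
            · exact Or.inr (Or.inr ⟨y, rfl, by rw [h]⟩)
          · rintro ⟨hne, (⟨h, -⟩ | ⟨z, hz1, hz2⟩) | (⟨h, -⟩ | ⟨z, hz1, hz2⟩)⟩
            · exact absurd h (by simp)
            · obtain rfl := Option.some.inj hz1
              exact Or.inl (Option.some.inj hz2)
            · exact absurd h (by simp)
            · obtain rfl := Option.some.inj hz1
              exact Or.inr (Option.some.inj hz2)

end BCaux

/-- Let `G` be a graph with no `K_4` subgraph and no induced odd wheel, and let `Q` be a
smallest induced odd cycle of `G` of length `p ≥ 5`.  Then for every index `i` the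
induced subgraph `G[B_i ∪ C_i]` is bipartite (i.e. 2-colourable). -/
theorem induced_BC_bipartite {V : Type*} [Fintype V] (G : SimpleGraph V)
    (hK4 : G.CliqueFree 4)
    (hwheel : ∀ t : ℕ, 1 ≤ t → ¬ ContainsInduced (wheel (2 * t + 1)) G)
    {p : ℕ} (v : ZMod p → V) (hQ : IsSmallestInducedOddCycle G v) :
    ∀ i : ZMod p, (G.induce (setB G v i ∪ setC G v i)).Colorable 2 :=
  BCaux.main G hwheel v
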